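/- Let F : ℝⁿ → ℝ be smooth and let φ : ℝⁿ × ℝⁿ → ℝ²ⁿ be the map φ(q,t) = (q + t, ∇F(q) + Hess F(q)·t). Then the Jacobian determinant of φ at (q,t) equals, up to sign, det A(q,t), where A(q,t) is the symmetric n×n matrix with entries a_{ij} = Σ_k t_k ∂³F/∂q_i∂q_j∂q_k. -/

import Mathlib

open Finset

noncomputable def pd {n : ℕ} (F : (Fin n → ℝ) → ℝ) (i : Fin n) (q : Fin n → ℝ) : ℝ :=
  fderiv ℝ F q (Pi.single i 1)

noncomputable def pd2 {n : ℕ} (F : (Fin n → ℝ) → ℝ) (i k : Fin n) (q : Fin n → ℝ) : ℝ :=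
  fderiv ℝ (pd F i) q (Pi.single k 1)

/-- Third partial derivative `∂³F/∂q_i∂q_j∂q_k`. -/
noncomputable def pd3 {n : ℕ} (F : (Fin n → ℝ) → ℝ) (i j k : Fin n) (q : Fin n → ℝ) : ℝ :=
  fderiv ℝ (pd2 F i j) q (Pi.single k 1)

lemma contDiff_pd {n : ℕ} {F : (Fin n → ℝ) → ℝ} (hF : ContDiff ℝ (⊤ : ℕ∞) F) (i : Fin n) :
    ContDiff ℝ (⊤ : ℕ∞) (pd F i) := by
  have h1 : ContDiff ℝ (⊤ : ℕ∞) (fderiv ℝ F) := hF.fderiv_right (by simp)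
  exact (ContinuousLinearMap.apply ℝ ℝ (Pi.single i 1)).contDiff.comp h1

lemma contDiff_pd2 {n : ℕ} {F : (Fin n → ℝ) → ℝ} (hF : ContDiff ℝ (⊤ : ℕ∞) F) (i k : Fin n) :
    ContDiff ℝ (⊤ : ℕ∞) (pd2 F i k) := contDiff_pd (contDiff_pd hF i) k

lemma pd3_eq {n : ℕ} {F : (Fin n → ℝ) → ℝ} (hF : ContDiff ℝ (⊤ : ℕ∞) F) (i j k : Fin n)
    (q : Fin n → ℝ) :
    pd3 F i j k q = fderiv ℝ (fderiv ℝ (pd F i)) q (Pi.single k 1) (Pi.single j 1) := by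
  have hd : ContDiff ℝ (⊤ : ℕ∞) (fderiv ℝ (pd F i)) := (contDiff_pd hF i).fderiv_right (by simp)
  have hc : HasFDerivAt (fderiv ℝ (pd F i)) (fderiv ℝ (fderiv ℝ (pd F i)) q) q :=
    ((hd.differentiable (by simp)) q).hasFDerivAt
  have h2 : HasFDerivAt (pd2 F i j)
      (((fderiv ℝ (pd F i) q).comp 0) +
        (fderiv ℝ (fderiv ℝ (pd F i)) q).flip (Pi.single j 1)) q :=
    hc.clm_apply (hasFDerivAt_const _ _)
  have := h2.fderiv
  rw [pd3, this]
  simp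

lemma pd3_symm {n : ℕ} {F : (Fin n → ℝ) → ℝ} (hF : ContDiff ℝ (⊤ : ℕ∞) F) (i j k : Fin n)
    (q : Fin n → ℝ) : pd3 F i j k q = pd3 F i k j q := by
  rw [pd3_eq hF, pd3_eq hF]
  exact ((contDiff_pd hF i).contDiffAt.isSymmSndFDerivAt (by rw [minSmoothness_of_isRCLikeNormedField]; exact WithTop.coe_le_coe.mpr (le_top : (2 : ℕ∞) ≤ ⊤))) _ _

/-- The Jacobian determinant of `φ(q,t) = (q + t, ∇F(q) + Hess F(q)·t)` equals, up to
sign, `det A(q,t)` where `a_{ij} = Σ_k t_k F_{q_i q_j q_k}`. -/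
theorem jacobian_of_tangent_sweep (n : ℕ) (F : (Fin n → ℝ) → ℝ) (hF : ContDiff ℝ (⊤ : ℕ∞) F)
    (φ : (Fin n → ℝ) × (Fin n → ℝ) → (Fin n → ℝ) × (Fin n → ℝ))
    (hφ : ∀ q t, φ (q, t) =
      (fun i => q i + t i, fun i => pd F i q + ∑ k, t k * pd2 F i k q))
    (A : (Fin n → ℝ) → (Fin n → ℝ) → Matrix (Fin n) (Fin n) ℝ)
    (hA : ∀ q t i j, A q t i j = ∑ k, t k * pd3 F i j k q) :
    ∀ q t, |LinearMap.det ((fderiv ℝ φ (q, t)).toLinearMap)| = |(A q t).det| := by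
  intro q t
  classical
  have hφ' : φ = fun p => ((fun i => p.1 i + p.2 i : Fin n → ℝ),
      (fun i => pd F i p.1 + ∑ k, p.2 k * pd2 F i k p.1 : Fin n → ℝ)) :=
    funext fun p => hφ p.1 p.2
  set D : ((Fin n → ℝ) × (Fin n → ℝ)) →L[ℝ] ((Fin n → ℝ) × (Fin n → ℝ)) :=
    (ContinuousLinearMap.fst ℝ (Fin n → ℝ) (Fin n → ℝ) +
        ContinuousLinearMap.snd ℝ (Fin n → ℝ) (Fin n → ℝ)).prod
      (ContinuousLinearMap.pi (fun i =>
        (fderiv ℝ (pd F i) q).comp (ContinuousLinearMap.fst ℝ (Fin n → ℝ) (Fin n → ℝ)) +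
        ∑ k, (t k • ((fderiv ℝ (pd2 F i k) q).comp
                 (ContinuousLinearMap.fst ℝ (Fin n → ℝ) (Fin n → ℝ))) +
              pd2 F i k q • ((ContinuousLinearMap.proj k).comp
                 (ContinuousLinearMap.snd ℝ (Fin n → ℝ) (Fin n → ℝ)))))) with hDdef
  have hD : HasFDerivAt (fun p : (Fin n → ℝ) × (Fin n → ℝ) =>
      ((fun i => p.1 i + p.2 i : Fin n → ℝ),
       (fun i => pd F i p.1 + ∑ k, p.2 k * pd2 F i k p.1 : Fin n → ℝ))) D (q, t) := by
    apply HasFDerivAt.prodMk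
    · exact hasFDerivAt_fst.add hasFDerivAt_snd
    · rw [hasFDerivAt_pi]
      intro i
      have h1 : HasFDerivAt (fun p : (Fin n → ℝ) × (Fin n → ℝ) => pd F i p.1)
          ((fderiv ℝ (pd F i) q).comp (ContinuousLinearMap.fst ℝ (Fin n → ℝ) (Fin n → ℝ)))
          (q, t) :=
        (((contDiff_pd hF i).differentiable (by simp) q).hasFDerivAt).comp (f := Prod.fst) (q, t) hasFDerivAt_fst
      refine h1.add (HasFDerivAt.fun_sum fun k _ => ?_)
      have hc : HasFDerivAt (fun p : (Fin n → ℝ) × (Fin n → ℝ) => p.2 k)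
          ((ContinuousLinearMap.proj k).comp
            (ContinuousLinearMap.snd ℝ (Fin n → ℝ) (Fin n → ℝ))) (q, t) :=
        ((ContinuousLinearMap.proj k).comp
            (ContinuousLinearMap.snd ℝ (Fin n → ℝ) (Fin n → ℝ))).hasFDerivAt
      have hd : HasFDerivAt (fun p : (Fin n → ℝ) × (Fin n → ℝ) => pd2 F i k p.1)
          ((fderiv ℝ (pd2 F i k) q).comp (ContinuousLinearMap.fst ℝ (Fin n → ℝ) (Fin n → ℝ)))
          (q, t) :=
        (((contDiff_pd2 hF i k).differentiable (by simp) q).hasFDerivAt).comp (f := Prod.fst) (q, t)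
          hasFDerivAt_fst
      exact hc.mul hd
  have hfd : fderiv ℝ φ (q, t) = D := by rw [hφ']; exact hD.fderiv
  rw [hfd]
  set b : Module.Basis (Fin n ⊕ Fin n) ℝ ((Fin n → ℝ) × (Fin n → ℝ)) :=
    (Pi.basisFun ℝ (Fin n)).prod (Pi.basisFun ℝ (Fin n)) with hbdef
  rw [← LinearMap.det_toMatrix b]
  have hpd2 : ∀ i j, fderiv ℝ (pd F i) q (Pi.single j 1) = pd2 F i j q := fun _ _ => rfl
  have hpd3 : ∀ i k j, fderiv ℝ (pd2 F i k) q (Pi.single j 1) = pd3 F i k j q :=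
    fun _ _ _ => rfl
  have hbl : ∀ j, b (Sum.inl j) = (Pi.single j 1, (0 : Fin n → ℝ)) := by
    intro j; simp [hbdef, Module.Basis.prod_apply, Pi.basisFun_apply]
  have hbr : ∀ j, b (Sum.inr j) = ((0 : Fin n → ℝ), Pi.single j 1) := by
    intro j; simp [hbdef, Module.Basis.prod_apply, Pi.basisFun_apply]
  have hM : LinearMap.toMatrix b b D.toLinearMap =
      Matrix.fromBlocks 1 1
        (Matrix.of (fun i j => pd2 F i j q) + A q t) (Matrix.of fun i j => pd2 F i j q) := by
    ext r c
    rw [LinearMap.toMatrix_apply]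
    cases r with
    | inl i =>
      cases c with
      | inl j =>
        rw [hbl j]
        simp [hbdef, hDdef, Matrix.one_apply, Pi.single_apply, eq_comm]
      | inr j =>
        rw [hbr j]
        simp [hbdef, hDdef, Matrix.one_apply, Pi.single_apply, eq_comm]
    | inr i =>
      cases c with
      | inl j =>
        rw [hbl j]
        simp only [hbdef, hDdef, ContinuousLinearMap.coe_coe, ContinuousLinearMap.prod_apply,
          ContinuousLinearMap.add_apply, ContinuousLinearMap.pi_apply,
          ContinuousLinearMap.sum_apply, ContinuousLinearMap.smul_apply,
          ContinuousLinearMap.comp_apply, ContinuousLinearMap.coe_fst',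
          ContinuousLinearMap.coe_snd', ContinuousLinearMap.proj_apply,
          Module.Basis.prod_repr_inr, Matrix.fromBlocks_apply₂₁, Matrix.add_apply, Matrix.of_apply,
          Pi.basisFun_repr, hpd2, hpd3]
        simp only [map_zero, Pi.zero_apply, smul_eq_mul, mul_zero, add_zero]
        rw [hA]
        congr 1
        refine Finset.sum_congr rfl fun k _ => ?_
        rw [pd3_symm hF]
      | inr j =>
        rw [hbr j]
        simp only [hbdef, hDdef, ContinuousLinearMap.coe_coe, ContinuousLinearMap.prod_apply,
          ContinuousLinearMap.add_apply, ContinuousLinearMap.pi_apply,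
          ContinuousLinearMap.sum_apply, ContinuousLinearMap.smul_apply,
          ContinuousLinearMap.comp_apply, ContinuousLinearMap.coe_fst',
          ContinuousLinearMap.coe_snd', ContinuousLinearMap.proj_apply,
          Module.Basis.prod_repr_inr, Matrix.fromBlocks_apply₂₂, Matrix.of_apply,
          Pi.basisFun_repr]
        simp [Pi.single_apply, mul_ite]
  rw [hM, Matrix.det_fromBlocks_one₁₁, Matrix.mul_one, sub_add_cancel_left, Matrix.det_neg]
  simp [abs_mul]
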